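/- Let G = (A, Ω) be a Müller game. If there is no nonempty X ⊆ V such that A(X) is a subarena that is a 1-trap in A and Player 0 fully wins G(X), then Win_0(G) = ∅ and Win_1(G) = V. -/

import Mathlib

open Set

/-- An arena: a finite directed bipartite graph where every vertex has an
outgoing edge.  The vertex set is `V0 ∪ V1` inside the finite type `α`. -/
structure Arena (α : Type) [Fintype α] where
  V0 : Set α
  V1 : Set α
  E : Set (α × α)
  disj : Disjoint V0 V1
  bipartite : E ⊆ (V0 ×ˢ V1) ∪ (V1 ×ˢ V0)
  succ : ∀ v ∈ V0 ∪ V1, ∃ u, (v, u) ∈ E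

variable {α : Type} [Fintype α]

/-- The set of positions of the arena. -/
def Arena.V (A : Arena α) : Set α := A.V0 ∪ A.V1

/-- The positions of Player σ (σ ∈ {0,1}). -/
def Arena.P (A : Arena α) (σ : Fin 2) : Set α := if σ = 0 then A.V0 else A.V1

/-- `A(X)` is a subarena: `X ⊆ V` and every vertex of `X` has an
outgoing edge inside `X`. -/
def Subarena (A : Arena α) (X : Set α) : Prop :=
  X ⊆ A.V ∧ ∀ v ∈ X, ∃ u ∈ X, (v, u) ∈ A.E

/-- `A(Y)` is a σ-trap of the pseudo-arena `A(X)`: every vertex of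
`Y ∩ V_{1-σ}` has an `E`-successor in `Y`, and every vertex of `Y ∩ V_σ`
has all of its `E`-successors inside `X` lying in `Y`.
A σ-trap of `A` itself is `TrapIn A A.V σ Y`. -/
def TrapIn (A : Arena α) (X : Set α) (σ : Fin 2) (Y : Set α) : Prop :=
  Y ⊆ X ∧
  (∀ v ∈ Y ∩ A.P (1 - σ), ∃ u ∈ Y, (v, u) ∈ A.E) ∧
  (∀ v ∈ Y ∩ A.P σ, ∀ u, (v, u) ∈ A.E → u ∈ X → u ∈ Y)

/-- A play of the (pseudo-)arena `A(X)`: an infinite `E`-path staying in `X`. -/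
def IsPlayIn (A : Arena α) (X : Set α) (ρ : ℕ → α) : Prop :=
  ∀ i, ρ i ∈ X ∧ (ρ i, ρ (i + 1)) ∈ A.E

/-- The set of vertices occurring infinitely often in the play `ρ`. -/
def InfOcc (ρ : ℕ → α) : Set α := {v | {i | ρ i = v}.Infinite}

/-- A strategy for Player σ in the game played on the pseudo-arena `A(X)`:
it maps a history (the finite prefix before the current vertex) and the
current vertex of `V_σ ∩ X` to an `E`-successor inside `X`. -/
structure StrategyIn (A : Arena α) (X : Set α) (σ : Fin 2) where
  move : List α → α → α
  legal : ∀ h v, v ∈ X ∩ A.P σ → (v, move h v) ∈ A.E ∧ move h v ∈ X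

/-- A play is consistent with a strategy for Player σ if every move from a
vertex of `V_σ` follows the strategy. -/
def ConsistentIn {A : Arena α} {X : Set α} {σ : Fin 2} (s : StrategyIn A X σ)
    (ρ : ℕ → α) : Prop :=
  ∀ i, ρ i ∈ A.P σ → ρ (i + 1) = s.move (List.ofFn fun j : Fin i => ρ j) (ρ i)

/-- Player σ wins the game on `A(X)` (with payoff `payoff` describing the
plays won by Player 0) from position `v`. -/
def WinsFrom (A : Arena α) (X : Set α) (payoff : (ℕ → α) → Prop) (σ : Fin 2)
    (v : α) : Prop :=
  ∃ s : StrategyIn A X σ, ∀ ρ, IsPlayIn A X ρ → ρ 0 = v → ConsistentIn s ρ →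
    (if σ = 0 then payoff ρ else ¬ payoff ρ)

/-- `Win_σ` of the game on `A(X)`. -/
def WinSet (A : Arena α) (X : Set α) (payoff : (ℕ → α) → Prop) (σ : Fin 2) :
    Set α :=
  {v ∈ X | WinsFrom A X payoff σ v}

/-- Player σ fully wins the game on `A(X)`. -/
def FullyWins (A : Arena α) (X : Set α) (payoff : (ℕ → α) → Prop)
    (σ : Fin 2) : Prop :=
  ∀ v ∈ X, WinsFrom A X payoff σ v

/-- The attractor `Attr_σ(T, A(X))`: the least `W ⊇ T` containing every
`u ∈ X ∩ V_σ` with some `E`-successor in `W ∩ X` and every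
`u ∈ X ∩ V_{1-σ}` all of whose `E`-successors inside `X` lie in `W`. -/
def AttrIn (A : Arena α) (X : Set α) (σ : Fin 2) (T : Set α) : Set α :=
  ⋂₀ {W | T ⊆ W ∧
    (∀ u ∈ X ∩ A.P σ, (∃ w ∈ W ∩ X, (u, w) ∈ A.E) → u ∈ W) ∧
    (∀ u ∈ X ∩ A.P (1 - σ), (∀ w, (u, w) ∈ A.E → w ∈ X → w ∈ W) → u ∈ W)}

/-- The Müller winning condition: Player 0 wins the play `ρ` iff `Inf(ρ) ∈ Ω`. -/
def MullerPayoff (Ω : Set (Set α)) : (ℕ → α) → Prop := fun ρ => InfOcc ρ ∈ Ω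

/-!
If Player 0 wins from `v` with a strategy `s`, the positions reachable from `v` under `s` form a
nonempty subarena that is a 1-trap and on which Player 0 wins from everywhere; so the hypothesis
forces `Win_0 = ∅`. Then `Win_1 = V` by determinacy of Müller games, proved by Zielonka's induction
on subarenas `X`. Let `σ` be the player winning the plays that visit every vertex of `X`
infinitely often. If, for every `x ∈ X`, Player `σ` wins everywhere in `X` minus the
`σ`-attractor of `x`, then `σ` wins everywhere in `X` by attracting to the vertices of `X` in turn
and playing the subgame strategies in between. Otherwise the opponent wins a nonempty region of
such a subgame; together with its attractor it is won by the opponent in `X`, and induction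
applies to the rest.
-/

noncomputable section

open scoped Classical

section Arena

variable {A : Arena α} {X Y : Set α} {σ : Fin 2} {u v : α}

lemma Arena.mem_V_of_mem_E (h : (u, v) ∈ A.E) : u ∈ A.V := by
  rcases A.bipartite h with ⟨hu, _⟩ | ⟨hu, _⟩
  exacts [Or.inl hu, Or.inr hu]

lemma Arena.mem_P_or_mem_P_sub (hv : v ∈ A.V) (σ : Fin 2) : v ∈ A.P σ ∨ v ∈ A.P (1 - σ) := by
  fin_cases σ <;> simpa [Arena.P, Arena.V, or_comm] using hv

lemma Arena.notMem_P_sub (hv : v ∈ A.P σ) : v ∉ A.P (1 - σ) := by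
  fin_cases σ
  · exact A.disj.notMem_of_mem_left hv
  · exact A.disj.notMem_of_mem_right hv

lemma Arena.subarena_V : Subarena A A.V :=
  ⟨subset_rfl, fun v hv =>
    let ⟨u, hu⟩ := A.succ v hv
    ⟨u, (A.bipartite hu).elim (fun h => Or.inr h.2) (fun h => Or.inl h.2), hu⟩⟩

lemma TrapIn.subarena (hX : Subarena A X) (hY : TrapIn A X σ Y) : Subarena A Y := by
  refine ⟨hY.1.trans hX.1, fun v hv => ?_⟩
  rcases A.mem_P_or_mem_P_sub (hX.1 (hY.1 hv)) σ with hP | hP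
  · obtain ⟨u, hu, hE⟩ := hX.2 v (hY.1 hv)
    exact ⟨u, hY.2.2 v ⟨hv, hP⟩ u hE hu, hE⟩
  · exact hY.2.1 v ⟨hv, hP⟩

end Arena

section Histories

variable {β : Type*}

/-- The history `ρ 0, …, ρ (n-1)`, as it is passed to a strategy in `ConsistentIn`. -/
def hist (ρ : ℕ → β) (n : ℕ) : List β := List.ofFn fun j : Fin n => ρ j

@[simp] lemma hist_zero (ρ : ℕ → β) : hist ρ 0 = [] := rfl

@[simp] lemma length_hist (ρ : ℕ → β) (n : ℕ) : (hist ρ n).length = n := by simp [hist]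

lemma hist_succ (ρ : ℕ → β) (n : ℕ) : hist ρ (n + 1) = hist ρ n ++ [ρ n] := by
  rw [hist, hist, List.ofFn_succ_last]
  simp

lemma hist_congr {ρ ρ' : ℕ → β} {n : ℕ} (h : ∀ j < n, ρ j = ρ' j) : hist ρ n = hist ρ' n := by
  simp only [hist, List.ofFn_inj]
  exact funext fun j => h j j.isLt

lemma hist_add (ρ : ℕ → β) (m n : ℕ) :
    hist ρ (m + n) = hist ρ m ++ hist (fun t => ρ (m + t)) n := by
  induction n with
  | zero => simp
  | succ n ih => rw [← add_assoc, hist_succ, ih, hist_succ, List.append_assoc]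

lemma drop_hist (ρ : ℕ → β) (m n : ℕ) :
    (hist ρ (m + n)).drop m = hist (fun t => ρ (m + t)) n := by
  simp [hist_add]

lemma take_hist (ρ : ℕ → β) {m n : ℕ} (h : m ≤ n) : (hist ρ n).take m = hist ρ m := by
  obtain ⟨k, rfl⟩ := Nat.exists_eq_add_of_le h
  simp [hist_add]

lemma getD_hist (ρ : ℕ → β) {j n : ℕ} (h : j < n) (d : β) : (hist ρ n).getD j d = ρ j := by
  simp [hist, h]

end Histories

section InfOcc

variable {β : Type} {ρ : ℕ → β}

lemma mem_infOcc_iff {v : β} : v ∈ InfOcc ρ ↔ ∀ n, ∃ m, n ≤ m ∧ ρ m = v := by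
  show {i | ρ i = v}.Infinite ↔ _
  rw [← Nat.frequently_atTop_iff_infinite, Filter.frequently_atTop]

lemma infOcc_shift (ρ : ℕ → β) (n : ℕ) : InfOcc (fun t => ρ (n + t)) = InfOcc ρ := by
  ext v
  simp only [mem_infOcc_iff]
  refine ⟨fun h N => ?_, fun h N => ?_⟩
  · obtain ⟨m, hm, hv⟩ := h N
    exact ⟨n + m, by omega, hv⟩
  · obtain ⟨m, hm, hv⟩ := h (n + N)
    exact ⟨m - n, by omega, by rwa [Nat.add_sub_cancel' (by omega)]⟩

lemma infOcc_subset {S : Set β} (h : ∀ t, ρ t ∈ S) : InfOcc ρ ⊆ S := fun _ hv =>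
  let ⟨_, _, hm⟩ := mem_infOcc_iff.1 hv 0
  hm ▸ h _

end InfOcc

def PrefixIndependent {β : Type*} (payoff : (ℕ → β) → Prop) : Prop :=
  ∀ ρ n, payoff (fun t => ρ (n + t)) ↔ payoff ρ

lemma prefixIndependent_mullerPayoff {β : Type} (Ω : Set (Set β)) :
    PrefixIndependent (MullerPayoff Ω) :=
  fun ρ n => by rw [MullerPayoff, MullerPayoff, infOcc_shift]

/-- `WinsFrom` unfolds to this condition. -/
def WinsPlay {β : Type*} (payoff : (ℕ → β) → Prop) (σ : Fin 2) (ρ : ℕ → β) : Prop :=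
  if σ = 0 then payoff ρ else ¬ payoff ρ

lemma PrefixIndependent.winsPlay_shift {β : Type*} {payoff : (ℕ → β) → Prop}
    (hpi : PrefixIndependent payoff) (σ : Fin 2) (ρ : ℕ → β) (n : ℕ) :
    WinsPlay payoff σ (fun t => ρ (n + t)) ↔ WinsPlay payoff σ ρ := by
  unfold WinsPlay
  split_ifs <;> simp [hpi ρ n]

section Strategies

variable {A : Arena α} {X Y Z D : Set α} {π : Fin 2} {payoff : (ℕ → α) → Prop} {u v : α}
  {ρ : ℕ → α}

def StrategyIn.IsWinningFrom (s : StrategyIn A X π) (payoff : (ℕ → α) → Prop) (v : α) : Prop :=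
  ∀ ρ, IsPlayIn A X ρ → ρ 0 = v → ConsistentIn s ρ → WinsPlay payoff π ρ

def StrategyIn.ofFun (π : Fin 2) (hX : Subarena A X) (f : List α → α → α) :
    StrategyIn A X π where
  move h v :=
    if (v, f h v) ∈ A.E ∧ f h v ∈ X then f h v
    else if hv : v ∈ X then (hX.2 v hv).choose else v
  legal h v hv := by
    split_ifs with hf hvX
    · exact hf
    · exact ⟨(hX.2 v hvX).choose_spec.2, (hX.2 v hvX).choose_spec.1⟩
    · exact absurd hv.1 ‹_›

lemma ConsistentIn.eq_of_ofFun {hX : Subarena A X} {f : List α → α → α}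
    (hc : ConsistentIn (StrategyIn.ofFun π hX f) ρ) {t : ℕ} {w : α} (hP : ρ t ∈ A.P π)
    (hf : f (hist ρ t) (ρ t) = w) (hE : (ρ t, w) ∈ A.E) (hw : w ∈ X) : ρ (t + 1) = w := by
  subst hf
  rw [hc t hP]
  exact if_pos ⟨hE, hw⟩

lemma exists_strategy_isWinningFrom (hX : Subarena A X) (h : ∀ u ∈ D, WinsFrom A X payoff π u) :
    ∃ s : α → StrategyIn A X π, ∀ u ∈ D, (s u).IsWinningFrom payoff u := by
  choose s hs using h
  refine ⟨fun u => if hu : u ∈ D then s u hu else .ofFun π hX fun _ v => v, fun u hu => ?_⟩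
  simp only [dif_pos hu]
  exact hs u hu

lemma StrategyIn.IsWinningFrom.winsPlay_of_tail (hpi : PrefixIndependent payoff)
    {s : StrategyIn A Y π} (hs : s.IsWinningFrom payoff u) (e : ℕ) (he : ρ e = u)
    (hY : ∀ t, ρ (e + t) ∈ Y) (hE : ∀ t, (ρ (e + t), ρ (e + t + 1)) ∈ A.E)
    (hcons : ∀ t, ρ (e + t) ∈ A.P π →
      ρ (e + t + 1) = s.move (hist (fun t => ρ (e + t)) t) (ρ (e + t))) :
    WinsPlay payoff π ρ :=
  (hpi.winsPlay_shift π ρ e).1 <| hs _ (fun t => ⟨hY t, hE t⟩) he fun t hP => hcons t hP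

lemma winsPlay_of_follows (hpi : PrefixIndependent payoff) (hX : Subarena A X)
    {f : List α → α → α} (hplay : IsPlayIn A X ρ) (hc : ConsistentIn (.ofFun π hX f) ρ)
    (hYX : Y ⊆ X) {s : StrategyIn A Y π} (hs : s.IsWinningFrom payoff u) {e : ℕ} (he : ρ e = u)
    (hY : ∀ t, ρ (e + t) ∈ Y)
    (hf : ∀ t, ρ (e + t) ∈ A.P π →
      f (hist ρ (e + t)) (ρ (e + t)) = s.move (hist (fun t => ρ (e + t)) t) (ρ (e + t))) :
    WinsPlay payoff π ρ := by
  refine hs.winsPlay_of_tail hpi e he hY (fun t => (hplay (e + t)).2) fun t hP => ?_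
  have hlegal := s.legal (hist (fun t => ρ (e + t)) t) _ ⟨hY t, hP⟩
  exact hc.eq_of_ofFun hP (hf t hP) hlegal.1 (hYX hlegal.2)

theorem WinsFrom.of_trapIn (hX : Subarena A X) (hZ : TrapIn A X (1 - π) Z) (hv : v ∈ Z)
    (h : WinsFrom A Z payoff π v) : WinsFrom A X payoff π v := by
  obtain ⟨s, hs⟩ := h
  refine ⟨.ofFun π hX s.move, fun ρ hplay h0 hc => ?_⟩
  have hfollow : ∀ t, ρ t ∈ Z → ρ t ∈ A.P π → ρ (t + 1) = s.move (hist ρ t) (ρ t) :=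
    fun t hZt hP =>
      let hlegal := s.legal (hist ρ t) (ρ t) ⟨hZt, hP⟩
      hc.eq_of_ofFun hP rfl hlegal.1 (hZ.1 hlegal.2)
  have hstay : ∀ t, ρ t ∈ Z := by
    intro t
    induction t with
    | zero => exact h0 ▸ hv
    | succ t ih =>
      rcases A.mem_P_or_mem_P_sub (hX.1 (hplay t).1) π with hP | hP
      · rw [hfollow t ih hP]
        exact (s.legal _ _ ⟨ih, hP⟩).2
      · exact hZ.2.2 _ ⟨ih, hP⟩ _ (hplay t).2 (hplay (t + 1)).1
  exact hs ρ (fun t => ⟨hstay t, (hplay t).2⟩) h0 fun t hP => hfollow t (hstay t) hP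

end Strategies

section Switch

variable {A : Arena α} {X D : Set α} {π : Fin 2} {payoff : (ℕ → α) → Prop} {ρ : ℕ → α}

/-- Play `g` until the play first visits `D`, say at `u`; from then on play `sD u`, fed with
the history since that visit. -/
def switchMove (D : Set α) (g : List α → α → α) (sD : α → StrategyIn A X π)
    (h : List α) (v : α) : α :=
  if hex : ∃ j < (h ++ [v]).length, (h ++ [v]).getD j v ∈ D then
    (sD ((h ++ [v]).getD (Nat.find hex) v)).move (h.drop (Nat.find hex)) v
  else g h v

variable {g : List α → α → α} {sD : α → StrategyIn A X π}

lemma switchMove_hist_of_forall_not_mem {i : ℕ} (hno : ∀ j ≤ i, ρ j ∉ D) :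
    switchMove D g sD (hist ρ i) (ρ i) = g (hist ρ i) (ρ i) := by
  rw [switchMove, dif_neg]
  rintro ⟨j, hj, hjD⟩
  rw [← hist_succ, length_hist] at hj
  rw [← hist_succ, getD_hist ρ hj] at hjD
  exact hno j (by omega) hjD

lemma switchMove_hist_of_first {n : ℕ} (hn : ρ n ∈ D) (hfirst : ∀ j < n, ρ j ∉ D) (t : ℕ) :
    switchMove D g sD (hist ρ (n + t)) (ρ (n + t)) =
      (sD (ρ n)).move (hist (fun t => ρ (n + t)) t) (ρ (n + t)) := by
  have hvis : ∀ j < n + t + 1, ((hist ρ (n + t) ++ [ρ (n + t)]).getD j (ρ (n + t)) ∈ D ↔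
      ρ j ∈ D) := fun j hj => by rw [← hist_succ, getD_hist ρ hj]
  have hex : ∃ j < (hist ρ (n + t) ++ [ρ (n + t)]).length,
      (hist ρ (n + t) ++ [ρ (n + t)]).getD j (ρ (n + t)) ∈ D :=
    ⟨n, by simp, (hvis n (by omega)).2 hn⟩
  have hfind : Nat.find hex = n := by
    refine (Nat.find_eq_iff hex).2 ⟨⟨by simp, (hvis n (by omega)).2 hn⟩, ?_⟩
    rintro m hm ⟨-, hmD⟩
    exact hfirst m hm ((hvis m (by omega)).1 hmD)
  rw [switchMove, dif_pos hex, hfind, ← hist_succ, getD_hist ρ (by omega), drop_hist]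

lemma winsPlay_switchMove (hpi : PrefixIndependent payoff) (hX : Subarena A X)
    (hsD : ∀ u ∈ D, (sD u).IsWinningFrom payoff u) (hplay : IsPlayIn A X ρ)
    (hc : ConsistentIn (.ofFun π hX (switchMove D g sD)) ρ) (hvis : ∃ t, ρ t ∈ D) :
    WinsPlay payoff π ρ :=
  winsPlay_of_follows hpi hX hplay hc subset_rfl (hsD _ (Nat.find_spec hvis)) rfl
    (fun _ => (hplay _).1)
    fun t _ => switchMove_hist_of_first (Nat.find_spec hvis) (fun _ => Nat.find_min hvis) t

theorem WinsFrom.of_diff (hpi : PrefixIndependent payoff) (hX : Subarena A X)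
    (hD : ∀ u ∈ D, WinsFrom A X payoff π u) {v : α} (hv : WinsFrom A (X \ D) payoff π v) :
    WinsFrom A X payoff π v := by
  obtain ⟨sD, hsD⟩ := exists_strategy_isWinningFrom hX hD
  obtain ⟨s, hs⟩ := hv
  refine ⟨.ofFun π hX (switchMove D s.move sD), fun ρ hplay h0 hc => ?_⟩
  by_cases hvis : ∃ t, ρ t ∈ D
  · exact winsPlay_switchMove hpi hX hsD hplay hc hvis
  push Not at hvis
  exact winsPlay_of_follows (e := 0) hpi hX hplay hc sdiff_subset hs h0
    (fun t => ⟨(hplay _).1, hvis _⟩)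
    fun t _ => by simpa using switchMove_hist_of_forall_not_mem fun j _ => hvis j

end Switch

section Attractor

variable (A : Arena α) (X : Set α) (σ : Fin 2) (T : Set α)

def attrStep : Set α →o Set α where
  toFun W := T ∪ {u | u ∈ X ∩ A.P σ ∧ ∃ w ∈ W ∩ X, (u, w) ∈ A.E} ∪
    {u | u ∈ X ∩ A.P (1 - σ) ∧ ∀ w, (u, w) ∈ A.E → w ∈ X → w ∈ W}
  monotone' W W' h := by
    refine union_subset_union (union_subset_union_right _ ?_) ?_
    · exact fun u ⟨hu, w, hw, hE⟩ => ⟨hu, w, ⟨h hw.1, hw.2⟩, hE⟩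
    · exact fun u ⟨hu, hall⟩ => ⟨hu, fun w hE hw => h (hall w hE hw)⟩

lemma attrIn_eq_lfp : AttrIn A X σ T = OrderHom.lfp (attrStep A X σ T) := by
  rw [AttrIn, OrderHom.lfp]
  congr 1
  ext W
  show _ ↔ attrStep A X σ T W ⊆ W
  refine ⟨fun ⟨hT, hσ, hτ⟩ => ?_, fun h => ⟨?_, ?_, ?_⟩⟩
  · exact union_subset (union_subset hT fun u ⟨hu, hw⟩ => hσ u hu hw) fun u ⟨hu, hw⟩ => hτ u hu hw
  · exact fun u hu => h (Or.inl (Or.inl hu))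
  · exact fun u hu hw => h (Or.inl (Or.inr ⟨hu, hw⟩))
  · exact fun u hu hw => h (Or.inr ⟨hu, hw⟩)

lemma attrStep_attrIn : attrStep A X σ T (AttrIn A X σ T) = AttrIn A X σ T := by
  rw [attrIn_eq_lfp, OrderHom.map_lfp]

/-- On a finite type the iteration of `attrStep` from `∅` stabilises at the least fixed point. -/
lemma mem_attrIn_iff {u : α} : u ∈ AttrIn A X σ T ↔ ∃ n, u ∈ (attrStep A X σ T)^[n] ∅ := by
  set f := attrStep A X σ T
  have hmono : Monotone fun n => f^[n] ∅ :=
    Monotone.monotone_iterate_of_le_map f.monotone (empty_subset _)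
  have hle : ∀ n, f^[n] ∅ ⊆ OrderHom.lfp f := by
    intro n
    induction n with
    | zero => exact empty_subset _
    | succ n ih =>
      rw [Function.iterate_succ_apply', ← OrderHom.map_lfp]
      exact f.monotone ih
  obtain ⟨N, hN⟩ := WellFoundedGT.monotone_chain_condition ⟨_, hmono⟩
  have hfix : f (f^[N] ∅) = f^[N] ∅ := by
    rw [← Function.iterate_succ_apply' f N]
    exact (hN (N + 1) N.le_succ).symm
  rw [attrIn_eq_lfp]
  exact ⟨fun hu => ⟨N, OrderHom.lfp_le_fixed f hfix hu⟩, fun ⟨n, hn⟩ => hle n hn⟩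

variable {A X σ T}

lemma subset_attrIn : T ⊆ AttrIn A X σ T := fun _ hu =>
  attrStep_attrIn A X σ T ▸ Or.inl (Or.inl hu)

lemma trapIn_diff_attrIn : TrapIn A X σ (X \ AttrIn A X σ T) := by
  have hclosed := (attrStep_attrIn A X σ T).le
  refine ⟨sdiff_subset, fun v ⟨⟨hvX, hvA⟩, hP⟩ => ?_, fun v ⟨⟨hvX, hvA⟩, hP⟩ w hE hw => ?_⟩
  · by_contra! hstuck
    refine hvA (hclosed (Or.inr ⟨⟨hvX, hP⟩, fun w hE hw => ?_⟩))
    by_contra hwA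
    exact hstuck w ⟨hw, hwA⟩ hE
  · exact ⟨hw, fun hwA => hvA (hclosed (Or.inl (Or.inr ⟨⟨hvX, hP⟩, w, ⟨hwA, hw⟩, hE⟩)))⟩

variable (A X σ T)

def attrRank (u : α) : ℕ :=
  if h : ∃ n, u ∈ (attrStep A X σ T)^[n] ∅ then Nat.find h else 0

variable {A X σ T}

lemma exists_mem_attrStep_of_mem_attrIn {u : α} (hu : u ∈ AttrIn A X σ T) :
    ∃ W, u ∈ attrStep A X σ T W ∧
      ∀ w ∈ W, w ∈ AttrIn A X σ T ∧ attrRank A X σ T w < attrRank A X σ T u := by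
  have hex := (mem_attrIn_iff A X σ T).1 hu
  have hr : attrRank A X σ T u = Nat.find hex := dif_pos hex
  obtain ⟨n, hn⟩ : ∃ n, Nat.find hex = n + 1 := Nat.exists_eq_succ_of_ne_zero fun h0 => by
    simpa [h0] using Nat.find_spec hex
  refine ⟨_, by simpa [hn, Function.iterate_succ_apply'] using Nat.find_spec hex,
    fun w hw => ⟨(mem_attrIn_iff A X σ T).2 ⟨n, hw⟩, ?_⟩⟩
  have hw' : ∃ n, w ∈ (attrStep A X σ T)^[n] ∅ := ⟨n, hw⟩
  rw [hr, hn, attrRank, dif_pos hw']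
  exact Nat.lt_succ_of_le (Nat.find_min' hw' hw)

lemma exists_attrRank_lt {u : α} (hu : u ∈ AttrIn A X σ T) (hT : u ∉ T) (hP : u ∈ A.P σ) :
    ∃ w ∈ X, (u, w) ∈ A.E ∧ w ∈ AttrIn A X σ T ∧ attrRank A X σ T w < attrRank A X σ T u := by
  obtain ⟨W, (hu | ⟨-, w, hw, hE⟩) | ⟨hu, -⟩, hW⟩ := exists_mem_attrStep_of_mem_attrIn hu
  · exact absurd hu hT
  · exact ⟨w, hw.2, hE, hW w hw.1⟩
  · exact absurd hu.2 (A.notMem_P_sub hP)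

lemma attrRank_lt_of_mem_P_sub {u w : α} (hu : u ∈ AttrIn A X σ T) (hT : u ∉ T)
    (hP : u ∈ A.P (1 - σ)) (hE : (u, w) ∈ A.E) (hw : w ∈ X) :
    w ∈ AttrIn A X σ T ∧ attrRank A X σ T w < attrRank A X σ T u := by
  obtain ⟨W, (hu | ⟨hu, -⟩) | ⟨-, hall⟩, hW⟩ := exists_mem_attrStep_of_mem_attrIn hu
  · exact absurd hu hT
  · exact absurd hP (A.notMem_P_sub hu.2)
  · exact hW w (hall w hE hw)

variable (A X σ T)

def attrMove (u : α) : α :=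
  if h : ∃ w ∈ X, (u, w) ∈ A.E ∧ w ∈ AttrIn A X σ T ∧ attrRank A X σ T w < attrRank A X σ T u
  then h.choose else u

variable {A X σ T}

lemma attrMove_spec {u : α} (hu : u ∈ AttrIn A X σ T) (hT : u ∉ T) (hP : u ∈ A.P σ) :
    attrMove A X σ T u ∈ X ∧ (u, attrMove A X σ T u) ∈ A.E ∧
      attrMove A X σ T u ∈ AttrIn A X σ T ∧
      attrRank A X σ T (attrMove A X σ T u) < attrRank A X σ T u := by
  have h := exists_attrRank_lt hu hT hP
  rw [attrMove, dif_pos h]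
  exact h.choose_spec

lemma exists_mem_of_follows_attrMove {ρ : ℕ → α} (hplay : IsPlayIn A X ρ) {t₀ : ℕ}
    (h₀ : ρ t₀ ∈ AttrIn A X σ T)
    (hmove : ∀ t ≥ t₀, ρ t ∈ AttrIn A X σ T → ρ t ∉ T → ρ t ∈ A.P σ →
      ρ (t + 1) = attrMove A X σ T (ρ t)) :
    ∃ t ≥ t₀, ρ t ∈ T := by
  have hstep : ∀ t ≥ t₀, ρ t ∈ AttrIn A X σ T → ρ t ∉ T →
      ρ (t + 1) ∈ AttrIn A X σ T ∧ attrRank A X σ T (ρ (t + 1)) < attrRank A X σ T (ρ t) := by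
    intro t ht hA hT
    rcases A.mem_P_or_mem_P_sub (A.mem_V_of_mem_E (hplay t).2) σ with hP | hP
    · rw [hmove t ht hA hT hP]
      exact (attrMove_spec hA hT hP).2.2
    · exact attrRank_lt_of_mem_P_sub hA hT hP (hplay t).2 (hplay (t + 1)).1
  suffices h : ∀ r, ∀ t ≥ t₀, ρ t ∈ AttrIn A X σ T → attrRank A X σ T (ρ t) < r →
      ∃ t' ≥ t, ρ t' ∈ T from
    h _ t₀ le_rfl h₀ (Nat.lt_succ_self _)
  intro r
  induction r with
  | zero => exact fun _ _ _ h => absurd h (Nat.not_lt_zero _)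
  | succ r ih =>
    intro t ht hA hr
    by_cases hT : ρ t ∈ T
    · exact ⟨t, le_rfl, hT⟩
    obtain ⟨hA', hlt⟩ := hstep t ht hA hT
    obtain ⟨t', ht', hT'⟩ := ih (t + 1) (by omega) hA' (by omega)
    exact ⟨t', by omega, hT'⟩

theorem WinsFrom.of_mem_attrIn {payoff : (ℕ → α) → Prop} (hpi : PrefixIndependent payoff)
    (hX : Subarena A X) (hT : ∀ u ∈ T, WinsFrom A X payoff σ u) {v : α}
    (hv : v ∈ AttrIn A X σ T) : WinsFrom A X payoff σ v := by
  obtain ⟨sT, hsT⟩ := exists_strategy_isWinningFrom hX hT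
  refine ⟨.ofFun σ hX (switchMove T (fun _ => attrMove A X σ T) sT), fun ρ hplay h0 hc => ?_⟩
  by_cases hvis : ∃ t, ρ t ∈ T
  · exact winsPlay_switchMove hpi hX hsT hplay hc hvis
  push Not at hvis
  obtain ⟨t, -, ht⟩ := exists_mem_of_follows_attrMove hplay (t₀ := 0) (h0 ▸ hv)
    fun t _ hA hT hP =>
      let hspec := attrMove_spec hA hT hP
      hc.eq_of_ofFun hP (switchMove_hist_of_forall_not_mem fun j _ => hvis j) hspec.2.1 hspec.1
  exact (hvis t ht).elim

end Attractor

lemma Nat.forall_Icc_iff_find_le {G : ℕ → Prop} [DecidablePred G] (hG : ∃ e, ∀ j ≥ e, G j)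
    {t : ℕ} (ht : Nat.find hG ≤ t) (m : ℕ) :
    (∀ j, m ≤ j → j ≤ t → G j) ↔ Nat.find hG ≤ m := by
  refine ⟨fun h => ?_, fun hm j hj _ => Nat.find_spec hG j (hm.trans hj)⟩
  by_contra! hlt
  refine Nat.find_min hG (m := Nat.find hG - 1) (by omega) fun j hj => ?_
  rcases Nat.lt_or_ge j (Nat.find hG) with hj' | hj'
  · exact h j (by omega) (by omega)
  · exact Nat.find_spec hG j hj'

lemma exists_forall_ge_eq_of_monotone {f : ℕ → ℕ} (hf : Monotone f) (hbdd : ∃ N, ∀ t, f t < N) :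
    ∃ i t₀, ∀ t ≥ t₀, f t = i := by
  obtain ⟨N, hN⟩ := hbdd
  have hbdd' : BddAbove (range f) := ⟨N, by rintro _ ⟨t, rfl⟩; exact (hN t).le⟩
  obtain ⟨t₀, ht₀⟩ := Nat.sSup_mem (range_nonempty f) hbdd'
  exact ⟨_, t₀, fun t ht => le_antisymm (le_csSup hbdd' ⟨t, rfl⟩) (ht₀ ▸ hf ht)⟩

section Phase

variable {β : Type*} (T : ℕ → Set β) {ρ : ℕ → β}

/-- The phase reached after a history: phase `i` ends at the first visit to `T i`. -/
def phase (l : List β) : ℕ := l.foldl (fun i x => if x ∈ T i then i + 1 else i) 0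

lemma phase_hist_succ (ρ : ℕ → β) (t : ℕ) :
    phase T (hist ρ (t + 1)) =
      if ρ t ∈ T (phase T (hist ρ t)) then phase T (hist ρ t) + 1 else phase T (hist ρ t) := by
  rw [phase, phase, hist_succ, List.foldl_append]
  rfl

lemma monotone_phase_hist (ρ : ℕ → β) : Monotone fun t => phase T (hist ρ t) :=
  monotone_nat_of_le_succ fun t => by rw [phase_hist_succ]; split_ifs <;> omega

lemma phase_hist_le (ρ : ℕ → β) (t : ℕ) : phase T (hist ρ t) ≤ t := by
  induction t with
  | zero => rfl
  | succ t ih => rw [phase_hist_succ]; split_ifs <;> omega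

lemma exists_mem_of_phase_unbounded (h : ∀ N, ∃ t, N ≤ phase T (hist ρ t)) (n : ℕ) :
    ∃ t ≥ n, ρ t ∈ T n := by
  obtain ⟨t, ht⟩ : ∃ t, Nat.find (h (n + 1)) = t + 1 :=
    Nat.exists_eq_succ_of_ne_zero fun h0 => by
      have := Nat.find_spec (h (n + 1))
      rw [h0] at this
      simp [phase] at this
  have hlt : ¬ n + 1 ≤ phase T (hist ρ t) := Nat.find_min (h (n + 1)) (by omega)
  have hge := ht ▸ Nat.find_spec (h (n + 1))
  rw [phase_hist_succ] at hge
  split_ifs at hge with hT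
  · have hn : phase T (hist ρ t) = n := by omega
    exact ⟨t, hn ▸ phase_hist_le T ρ t, hn ▸ hT⟩
  · omega

end Phase

section Cycle

variable (A : Arena α) (X : Set α) (σ : Fin 2) {payoff : (ℕ → α) → Prop} (T : ℕ → Set α)
  {ρ : ℕ → α}

abbrev region (i : ℕ) : Set α := X \ AttrIn A X σ (T i)

/-- Where the current stay in the region of the current phase began. -/
def entry (l : List α) (d : α) : ℕ :=
  Nat.find (p := fun e => ∀ j, e ≤ j → j < l.length →
    phase T (l.take (j + 1)) = phase T l ∧ l.getD j d ∈ region A X σ T (phase T l))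
    ⟨l.length, fun _ hj hj' => absurd hj' (Nat.not_lt.2 hj)⟩

def cycleMove (s : (i : ℕ) → α → StrategyIn A (region A X σ T i) σ) (h : List α) (v : α) : α :=
  if v ∈ region A X σ T (phase T (h ++ [v])) then
    (s (phase T (h ++ [v])) ((h ++ [v]).getD (entry A X σ T (h ++ [v]) v) v)).move
      (h.drop (entry A X σ T (h ++ [v]) v)) v
  else attrMove A X σ (T (phase T (h ++ [v]))) v

variable {A X σ T} {s : (i : ℕ) → α → StrategyIn A (region A X σ T i) σ}

lemma entry_hist {i : ℕ}
    (hG : ∃ e, ∀ j ≥ e, phase T (hist ρ (j + 1)) = i ∧ ρ j ∈ region A X σ T i) {t : ℕ}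
    (ht : Nat.find hG ≤ t) : entry A X σ T (hist ρ (t + 1)) (ρ t) = Nat.find hG := by
  have hi : phase T (hist ρ (t + 1)) = i := (Nat.find_spec hG t ht).1
  have key : ∀ m, (∀ j, m ≤ j → j < (hist ρ (t + 1)).length →
      phase T ((hist ρ (t + 1)).take (j + 1)) = phase T (hist ρ (t + 1)) ∧
        (hist ρ (t + 1)).getD j (ρ t) ∈ region A X σ T (phase T (hist ρ (t + 1)))) ↔
      Nat.find hG ≤ m := by
    intro m
    rw [← Nat.forall_Icc_iff_find_le hG ht m, hi]
    refine forall_congr' fun j => imp_congr_right fun _ => ?_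
    rw [length_hist]
    refine ⟨fun h hj => ?_, fun h hj => ?_⟩
    · have := h (by omega)
      rwa [take_hist _ (by omega), getD_hist _ (by omega)] at this
    · rw [take_hist _ (by omega), getD_hist _ hj]
      exact h (by omega)
  rw [entry, Nat.find_eq_iff]
  exact ⟨(key _).2 le_rfl, fun m hm h => absurd ((key m).1 h) (by omega)⟩

lemma cycleMove_hist_of_mem {t : ℕ} (h : ρ t ∈ region A X σ T (phase T (hist ρ (t + 1)))) :
    cycleMove A X σ T s (hist ρ t) (ρ t) =
      (s (phase T (hist ρ (t + 1)))
        ((hist ρ (t + 1)).getD (entry A X σ T (hist ρ (t + 1)) (ρ t)) (ρ t))).move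
        ((hist ρ t).drop (entry A X σ T (hist ρ (t + 1)) (ρ t))) (ρ t) := by
  rw [cycleMove, ← hist_succ, if_pos h]

lemma cycleMove_hist_of_not_mem {t : ℕ}
    (h : ρ t ∉ region A X σ T (phase T (hist ρ (t + 1)))) :
    cycleMove A X σ T s (hist ρ t) (ρ t) = attrMove A X σ (T (phase T (hist ρ (t + 1)))) (ρ t) := by
  rw [cycleMove, ← hist_succ, if_neg h]

variable {hX : Subarena A X}

/-- Once the phase is stuck at `i`, the play never visits `T i`, so it cannot stay in the
attractor of `T i`, where it would follow `attrMove`. -/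
lemma mem_region_of_phase_eq (hplay : IsPlayIn A X ρ)
    (hc : ConsistentIn (.ofFun σ hX (cycleMove A X σ T s)) ρ) {i t₀ : ℕ}
    (hi : ∀ t ≥ t₀, phase T (hist ρ t) = i) : ∀ t ≥ t₀, ρ t ∈ region A X σ T i := by
  have hnoT : ∀ t ≥ t₀, ρ t ∉ T i := fun t ht hT => by
    have := hi (t + 1) (by omega)
    rw [phase_hist_succ, hi t ht, if_pos hT] at this
    omega
  intro t ht
  refine ⟨(hplay t).1, fun hA => ?_⟩
  obtain ⟨t', ht', hT⟩ := exists_mem_of_follows_attrMove hplay hA fun t' ht' hA' hT' hP => by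
    have hphase := hi (t' + 1) (by omega)
    have hspec := attrMove_spec hA' hT' hP
    refine hc.eq_of_ofFun hP ?_ hspec.2.1 hspec.1
    rw [cycleMove_hist_of_not_mem (by rw [hphase]; exact fun h => h.2 hA'), hphase]
  exact hnoT t' (by omega) hT

lemma winsPlay_cycleMove_of_phase_eq (hpi : PrefixIndependent payoff)
    (hs : ∀ i, ∀ u ∈ region A X σ T i, (s i u).IsWinningFrom payoff u) (hplay : IsPlayIn A X ρ)
    (hc : ConsistentIn (.ofFun σ hX (cycleMove A X σ T s)) ρ) {i t₀ : ℕ}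
    (hi : ∀ t ≥ t₀, phase T (hist ρ t) = i) : WinsPlay payoff σ ρ := by
  have hG : ∃ e, ∀ j ≥ e, phase T (hist ρ (j + 1)) = i ∧ ρ j ∈ region A X σ T i :=
    ⟨t₀, fun j hj => ⟨hi _ (by omega), mem_region_of_phase_eq hplay hc hi j hj⟩⟩
  have hgood := Nat.find_spec hG
  refine winsPlay_of_follows hpi hX hplay hc sdiff_subset (hs i _ (hgood _ le_rfl).2) rfl
    (fun t => (hgood _ (by omega)).2) fun t _ => ?_
  obtain ⟨hphase, hmem⟩ := hgood (Nat.find hG + t) (by omega)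
  rw [cycleMove_hist_of_mem (by rwa [hphase]), entry_hist hG (by omega), getD_hist _ (by omega),
    drop_hist, hphase]

theorem WinsFrom.of_cycle (hpi : PrefixIndependent payoff) (hX : Subarena A X)
    (hcyc : ∀ ρ, IsPlayIn A X ρ → (∀ n, ∃ t ≥ n, ρ t ∈ T n) → WinsPlay payoff σ ρ)
    (hwin : ∀ i, ∀ u ∈ region A X σ T i, WinsFrom A (region A X σ T i) payoff σ u) (v : α) :
    WinsFrom A X payoff σ v := by
  have hsub : ∀ i, Subarena A (region A X σ T i) := fun i => trapIn_diff_attrIn.subarena hX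
  choose s hs using fun i => exists_strategy_isWinningFrom (hsub i) (hwin i)
  refine ⟨.ofFun σ hX (cycleMove A X σ T s), fun ρ hplay _ hc => ?_⟩
  by_cases hunb : ∀ N, ∃ t, N ≤ phase T (hist ρ t)
  · exact hcyc ρ hplay (exists_mem_of_phase_unbounded T hunb)
  push Not at hunb
  obtain ⟨i, t₀, hi⟩ := exists_forall_ge_eq_of_monotone (monotone_phase_hist T ρ) hunb
  exact winsPlay_cycleMove_of_phase_eq hpi hs hplay hc hi

end Cycle

section Determinacy

variable {A : Arena α} {X : Set α} {Ω : Set (Set α)} {σ : Fin 2}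

lemma exists_seq_frequently_eq (hX : X.Nonempty) :
    ∃ x : ℕ → α, (∀ n, x n ∈ X) ∧ ∀ y ∈ X, ∀ N, ∃ n ≥ N, x n = y := by
  have : Nonempty X := hX.to_subtype
  set e := Fintype.equivFin X
  have hk : 0 < Fintype.card X := Fintype.card_pos
  refine ⟨fun n => e.symm ⟨n % Fintype.card X, Nat.mod_lt n hk⟩, fun n => Subtype.coe_prop _,
    fun y hy N => ⟨e ⟨y, hy⟩ + N * Fintype.card X, by nlinarith, ?_⟩⟩
  have hmod : (⟨(e ⟨y, hy⟩ + N * Fintype.card X) % Fintype.card X, Nat.mod_lt _ hk⟩ :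
      Fin (Fintype.card X)) = e ⟨y, hy⟩ :=
    Fin.ext <| (Nat.add_mul_mod_self_right _ _ _).trans (Nat.mod_eq_of_lt (e ⟨y, hy⟩).isLt)
  simp only [hmod, Equiv.symm_apply_apply]

/-- Zielonka's cycling argument: attract to the vertices of `X` in turn. -/
theorem WinsFrom.of_forall_diff_attrIn_singleton (hX : Subarena A X)
    (hσ : ∀ ρ, InfOcc ρ = X → WinsPlay (MullerPayoff Ω) σ ρ)
    (hwin : ∀ x ∈ X, ∀ u ∈ X \ AttrIn A X σ {x},
      WinsFrom A (X \ AttrIn A X σ {x}) (MullerPayoff Ω) σ u) {v : α} (hv : v ∈ X) :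
    WinsFrom A X (MullerPayoff Ω) σ v := by
  obtain ⟨x, hxX, hx⟩ := exists_seq_frequently_eq ⟨v, hv⟩
  refine .of_cycle (T := fun n => {x n}) (prefixIndependent_mullerPayoff Ω) hX
    (fun ρ hplay hvis => hσ ρ ?_) (fun i => hwin (x i) (hxX i)) v
  refine (infOcc_subset fun t => (hplay t).1).antisymm fun y hy => mem_infOcc_iff.2 fun N => ?_
  obtain ⟨n, hn, rfl⟩ := hx y hy N
  obtain ⟨t, ht, hρt⟩ := hvis n
  exact ⟨t, by omega, hρt⟩

theorem winsFrom_or_winsFrom_of_ssubset (hX : Subarena A X)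
    (IH : ∀ Y ⊂ X, Subarena A Y → ∀ v ∈ Y, ∀ π,
      WinsFrom A Y (MullerPayoff Ω) π v ∨ WinsFrom A Y (MullerPayoff Ω) (1 - π) v)
    (hσ : ∀ ρ, InfOcc ρ = X → WinsPlay (MullerPayoff Ω) σ ρ) {v : α} (hv : v ∈ X) :
    WinsFrom A X (MullerPayoff Ω) σ v ∨ WinsFrom A X (MullerPayoff Ω) (1 - σ) v := by
  have hpi := prefixIndependent_mullerPayoff Ω
  by_cases hall : ∀ x ∈ X, ∀ u ∈ X \ AttrIn A X σ {x},
      ¬ WinsFrom A (X \ AttrIn A X σ {x}) (MullerPayoff Ω) (1 - σ) u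
  · refine .inl (.of_forall_diff_attrIn_singleton hX hσ (fun x hx u hu => ?_) hv)
    have hsub : X \ AttrIn A X σ {x} ⊂ X :=
      ssubset_of_subset_not_subset sdiff_subset fun h => (h hx).2 (subset_attrIn rfl)
    exact (IH _ hsub (trapIn_diff_attrIn.subarena hX) u hu σ).resolve_right (hall x hx u hu)
  push Not at hall
  obtain ⟨x, -, u, hu, hτu⟩ := hall
  set D := AttrIn A X (1 - σ) (WinSet A (X \ AttrIn A X σ {x}) (MullerPayoff Ω) (1 - σ))
  have htrap : TrapIn A X (1 - (1 - σ)) (X \ AttrIn A X σ {x}) := by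
    rw [sub_sub_cancel]
    exact trapIn_diff_attrIn
  have hD : ∀ w ∈ D, WinsFrom A X (MullerPayoff Ω) (1 - σ) w :=
    fun w => WinsFrom.of_mem_attrIn hpi hX fun w hw => hw.2.of_trapIn hX htrap hw.1
  by_cases hvD : v ∈ D
  · exact .inr (hD v hvD)
  have hsub : X \ D ⊂ X :=
    ssubset_of_subset_not_subset sdiff_subset fun h => (h hu.1).2 (subset_attrIn ⟨hu, hτu⟩)
  rcases IH _ hsub (trapIn_diff_attrIn.subarena hX) v ⟨hv, hvD⟩ σ with h | h
  · exact .inl (h.of_trapIn hX trapIn_diff_attrIn ⟨hv, hvD⟩)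
  · exact .inr (h.of_diff hpi hX hD)

theorem muller_determined (hX : Subarena A X) {v : α} (hv : v ∈ X) (π : Fin 2) :
    WinsFrom A X (MullerPayoff Ω) π v ∨ WinsFrom A X (MullerPayoff Ω) (1 - π) v := by
  induction X using WellFoundedLT.induction generalizing v π with
  | _ X IH =>
  set σ : Fin 2 := if X ∈ Ω then 0 else 1
  have hσ : ∀ ρ, InfOcc ρ = X → WinsPlay (MullerPayoff Ω) σ ρ := fun ρ hρ => by
    by_cases hXΩ : X ∈ Ω <;> simp [σ, WinsPlay, MullerPayoff, hρ, hXΩ]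
  have hdet := winsFrom_or_winsFrom_of_ssubset hX (fun Y hY hYsub w hw π => IH Y hY hYsub hw π)
    hσ hv
  rcases (by omega : π = σ ∨ π = 1 - σ) with rfl | rfl
  · exact hdet
  · rwa [sub_sub_cancel, or_comm]

end Determinacy

section Reach

variable {A : Arena α} {X : Set α} {σ : Fin 2} (s : StrategyIn A X σ) {p q : ℕ → α} {n : ℕ}

def FollowsUpTo (p : ℕ → α) (n : ℕ) : Prop :=
  (∀ i ≤ n, p i ∈ X) ∧
    ∀ i < n, (p i, p (i + 1)) ∈ A.E ∧ (p i ∈ A.P σ → p (i + 1) = s.move (hist p i) (p i))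

def reachSet (v : α) : Set α := {w | ∃ p n, p 0 = v ∧ p n = w ∧ FollowsUpTo s p n}

variable {s}

lemma FollowsUpTo.congr (hp : FollowsUpTo s p n) (h : ∀ i ≤ n, p i = q i) :
    FollowsUpTo s q n := by
  refine ⟨fun i hi => h i hi ▸ hp.1 i hi, fun i hi => ?_⟩
  rw [← h i hi.le, ← h (i + 1) hi, ← hist_congr fun j hj => h j (by omega)]
  exact hp.2 i hi

lemma FollowsUpTo.succ (hp : FollowsUpTo s p n) (hn : p (n + 1) ∈ X)
    (hE : (p n, p (n + 1)) ∈ A.E) (hmove : p n ∈ A.P σ → p (n + 1) = s.move (hist p n) (p n)) :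
    FollowsUpTo s p (n + 1) :=
  ⟨fun i hi => (Nat.lt_or_eq_of_le hi).elim (fun hi => hp.1 i (by omega)) (· ▸ hn),
    fun i hi => (Nat.lt_or_eq_of_le (Nat.le_of_lt_succ hi)).elim (hp.2 i) (· ▸ ⟨hE, hmove⟩)⟩

lemma isPlayIn_of_followsUpTo {m : ℕ} (h : ∀ t, FollowsUpTo s p (m + t)) :
    IsPlayIn A X p ∧ ConsistentIn s p :=
  ⟨fun i => ⟨(h (i + 1)).1 i (by omega), ((h (i + 1)).2 i (by omega)).1⟩,
    fun i => ((h (i + 1)).2 i (by omega)).2⟩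

lemma FollowsUpTo.mem_reachSet_of_step {v u : α} (hp : FollowsUpTo s p n) (h0 : p 0 = v)
    (hu : u ∈ X) (hE : (p n, u) ∈ A.E) (hmove : p n ∈ A.P σ → u = s.move (hist p n) (p n)) :
    u ∈ reachSet s v := by
  have hupd : ∀ i ≤ n, p i = Function.update p (n + 1) u i :=
    fun i hi => (Function.update_of_ne (by omega) _ _).symm
  refine ⟨Function.update p (n + 1) u, n + 1, by simp [h0], by simp, ?_⟩
  refine (hp.congr hupd).succ (by simpa) (by simpa [← hupd n le_rfl]) fun hP => ?_
  rw [← hupd n le_rfl] at hP ⊢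
  rw [← hist_congr fun j hj => hupd j (by omega)]
  simpa using hmove hP

variable {v : α}

lemma self_mem_reachSet (hv : v ∈ X) : v ∈ reachSet s v :=
  ⟨fun _ => v, 0, rfl, rfl, fun i hi => by rwa [Nat.le_zero.1 hi], fun _ hi => absurd hi (by omega)⟩

lemma trapIn_reachSet : TrapIn A X (1 - σ) (reachSet s v) := by
  refine ⟨fun w ⟨p, n, _, hpn, hp⟩ => hpn ▸ hp.1 n le_rfl, fun w ⟨⟨p, n, h0, hpn, hp⟩, hP⟩ => ?_,
    fun w ⟨⟨p, n, h0, hpn, hp⟩, hP⟩ u hE hu => ?_⟩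
  · rw [sub_sub_cancel] at hP
    have hlegal := s.legal (hist p n) w ⟨hpn ▸ hp.1 n le_rfl, hP⟩
    subst hpn
    exact ⟨_, hp.mem_reachSet_of_step h0 hlegal.2 hlegal.1 fun _ => rfl, hlegal.1⟩
  · subst hpn
    exact hp.mem_reachSet_of_step h0 hu hE fun h => absurd hP (A.notMem_P_sub h)

/-- From `w`, play `s` with the history of a finite play from `v` to `w` prepended. -/
theorem fullyWins_reachSet {payoff : (ℕ → α) → Prop} (hpi : PrefixIndependent payoff)
    (hX : Subarena A X) (hs : s.IsWinningFrom payoff v) :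
    FullyWins A (reachSet s v) payoff σ := by
  rintro w ⟨p, n, h0, hpn, hp⟩
  have hR : Subarena A (reachSet s v) := trapIn_reachSet.subarena hX
  refine ⟨.ofFun σ hR fun h x => s.move (hist p n ++ h) x, fun ρ hplay hρ0 hc => ?_⟩
  set q : ℕ → α := fun i => if i < n then p i else ρ (i - n)
  have hqρ : ∀ t, q (n + t) = ρ t := fun t => by simp [q]
  have hqp : ∀ i ≤ n, p i = q i := fun i hi => by
    rcases Nat.lt_or_eq_of_le hi with hi | rfl
    · simp [q, hi]
    · simpa [hpn, hρ0] using (hqρ 0).symm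
  have hhist : ∀ t, hist q (n + t) = hist p n ++ hist ρ t := fun t => by
    rw [hist_add, hist_congr fun j hj => (hqp j hj.le).symm, funext hqρ]
  have hq0 : q 0 = v := hqp 0 (Nat.zero_le n) ▸ h0
  have hfollow : ∀ t, FollowsUpTo s q (n + t) := by
    intro t
    induction t with
    | zero => exact hp.congr hqp
    | succ t ih =>
      have hnext : q (n + t + 1) = ρ (t + 1) := hqρ (t + 1)
      rw [← add_assoc]
      refine ih.succ (hnext ▸ trapIn_reachSet.1 (hplay (t + 1)).1)
        (by rw [hnext, hqρ]; exact (hplay t).2) fun hP => ?_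
      have hlegal := s.legal (hist q (n + t)) (q (n + t)) ⟨ih.1 _ le_rfl, hP⟩
      have hreach := ih.mem_reachSet_of_step hq0 hlegal.2 hlegal.1 fun _ => rfl
      simp only [hhist, hqρ] at hlegal hreach hP
      rw [hnext, hhist, hqρ]
      exact hc.eq_of_ofFun hP rfl hlegal.1 hreach
  have hwin := hs q (isPlayIn_of_followsUpTo hfollow).1 hq0 (isPlayIn_of_followsUpTo hfollow).2
  rwa [← hpi.winsPlay_shift σ q n, funext hqρ] at hwin

end Reach

end

/-- Lemma 4.10, first part: if no nonempty subarena of `A` that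
is a 1-trap is fully won by Player 0, then `Win_0(G) = ∅` and `Win_1(G) = V`. -/
theorem stmt8 (A : Arena α) (Ω : Set (Set α))
    (h : ¬ ∃ X : Set α, X.Nonempty ∧ Subarena A X ∧ TrapIn A A.V 1 X ∧
      FullyWins A X (MullerPayoff Ω) 0) :
    WinSet A A.V (MullerPayoff Ω) 0 = ∅ ∧
      WinSet A A.V (MullerPayoff Ω) 1 = A.V := by
  have hwin₀ : WinSet A A.V (MullerPayoff Ω) 0 = ∅ := by
    refine eq_empty_of_forall_notMem fun v ⟨hv, s, hs⟩ => h ?_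
    exact ⟨reachSet s v, ⟨v, self_mem_reachSet hv⟩, trapIn_reachSet.subarena A.subarena_V,
      trapIn_reachSet, fullyWins_reachSet (prefixIndependent_mullerPayoff Ω) A.subarena_V hs⟩
  refine ⟨hwin₀, (sep_subset _ _).antisymm fun v hv => ⟨hv, ?_⟩⟩
  exact (muller_determined A.subarena_V hv 1).resolve_right fun h₀ =>
    hwin₀.subset ⟨hv, h₀⟩
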